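/- No integer congruent to 23 modulo 72 can be written as a sum of two squares and at most one power of 2. -/

import Mathlib

/-- A natural number `m` is a sum of two squares and at most one power of 2. -/
def IsSumTwoSquaresAddAtMostOnePow (m : ℕ) : Prop :=
  ∃ x y : ℤ, (m : ℤ) = x ^ 2 + y ^ 2 ∨ ∃ a : ℕ, (m : ℤ) = x ^ 2 + y ^ 2 + 2 ^ a

/-!
Modulo 8 a sum of two squares lies in {0, 1, 2, 4, 5}, so it is never 7, and adding a power
of 2 can reach 7 only with the power 2 itself. That remaining case is ruled out modulo 9,
where a sum of two squares is never 3.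
-/

theorem sq_add_sq_ne_seven_zmod_eight (u v : ZMod 8) : u ^ 2 + v ^ 2 ≠ 7 := by
  revert u v; decide

theorem eq_one_of_sq_add_sq_add_two_pow_eq_seven_zmod_eight (u v : ZMod 8) (a : ℕ)
    (h : u ^ 2 + v ^ 2 + 2 ^ a = 7) : a = 1 := by
  obtain _ | _ | _ | b := a
  · revert u v h; decide
  · rfl
  · revert u v h; decide
  · have h2b : (2 : ZMod 8) ^ (b + 3) = 0 := by
      rw [pow_add, show (2 : ZMod 8) ^ 3 = 0 from rfl, mul_zero]
    rw [h2b, add_zero] at h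
    exact absurd h (sq_add_sq_ne_seven_zmod_eight u v)

theorem sq_add_sq_ne_three_zmod_nine (u v : ZMod 9) : u ^ 2 + v ^ 2 ≠ 3 := by
  revert u v; decide

theorem not_one_pow_of_23_mod_72 (m : ℕ) (hm : m % 72 = 23) :
    ¬ IsSumTwoSquaresAddAtMostOnePow m := by
  have hm8 : (m : ZMod 8) = 7 := by
    rw [← ZMod.natCast_mod, show m % 8 = 7 by omega]; rfl
  have hm9 : (m : ZMod 9) = 5 := by
    rw [← ZMod.natCast_mod, show m % 9 = 5 by omega]; rfl
  rintro ⟨x, y, h | ⟨a, h⟩⟩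
  · have h8 := congrArg (Int.cast : ℤ → ZMod 8) h
    push_cast at h8
    exact sq_add_sq_ne_seven_zmod_eight x y (h8.symm.trans hm8)
  · have h8 := congrArg (Int.cast : ℤ → ZMod 8) h
    push_cast at h8
    obtain rfl := eq_one_of_sq_add_sq_add_two_pow_eq_seven_zmod_eight x y a (h8.symm.trans hm8)
    have h9 := congrArg (Int.cast : ℤ → ZMod 9) h
    push_cast at h9
    exact sq_add_sq_ne_three_zmod_nine x y (by linear_combination hm9 - h9)
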